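/- In the BP encoding of a binary tree, for any node v, the subtree rooted at v corresponds exactly to the half-open interval [open(v), enclose_close(v)) on the BP sequence, where open(v) is the opening parenthesis of v and enclose_close(v) is the closing parenthesis whose interval tightly encloses the interval of v's closing parenthesis. -/

import Mathlib

/-- A binary tree: `leaf` is the empty tree; each internal node has an
optional left and an optional right subtree (possibly `leaf`). -/
inductive BinTree : Type where
  | leaf : BinTree
  | node : BinTree → BinTree → BinTree
deriving DecidableEq

namespace BinTree

/-- Number of nodes of a binary tree. -/
def size : BinTree → ℕ
  | leaf => 0
  | node l r => l.size + r.size + 1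

/-- BalancedBP-parenthesis encoding of binary trees:
`BP(empty) = ε`, `BP(t) = '(' ++ BP(t_l) ++ ')' ++ BP(t_r)`.
`true` is an opening parenthesis, `false` a closing one. -/
def bp : BinTree → List Bool
  | leaf => []
  | node l r => true :: (l.bp ++ false :: r.bp)

/-- The subtree reached by following a path (`false` = left, `true` = right). -/
def subtreeAt : BinTree → List Bool → Option BinTree
  | t, [] => some t
  | leaf, _ :: _ => none
  | node l _, false :: p => subtreeAt l p
  | node _ r, true :: p => subtreeAt r p

/-- A path identifies an actual node of the tree (not an empty slot). -/
def ValidPath (t : BinTree) (p : List Bool) : Prop :=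
  ∃ l r, subtreeAt t p = some (node l r)

/-- Index (0-based) of the opening parenthesis of the node at a path. -/
def openIdx : BinTree → List Bool → Option ℕ
  | leaf, _ => none
  | node _ _, [] => some 0
  | node l _, false :: p => (openIdx l p).map (· + 1)
  | node l r, true :: p => (openIdx r p).map (· + (l.bp.length + 2))

/-- Index (0-based) of the closing parenthesis of the node at a path. -/
def closeIdx : BinTree → List Bool → Option ℕ
  | leaf, _ => none
  | node l _, [] => some (l.bp.length + 1)
  | node l _, false :: p => (closeIdx l p).map (· + 1)
  | node l r, true :: p => (closeIdx r p).map (· + (l.bp.length + 2))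

/-- Inorder rank (0-based) of the node at a path. -/
def inorderIdx : BinTree → List Bool → Option ℕ
  | leaf, _ => none
  | node l _, [] => some l.size
  | node l _, false :: p => inorderIdx l p
  | node l r, true :: p => (inorderIdx r p).map (· + (l.size + 1))

end BinTree

/-- A sequence of parentheses (`true` = '(') is balanced: equally many opening
and closing parentheses, and every prefix has at least as many opening ones. -/
def BalancedBP (s : List Bool) : Prop :=
  s.count true = s.count false ∧
  ∀ k, (s.take k).count false ≤ (s.take k).count true

/-- `excess s k`: number of opening minus closing parentheses among the first `k` symbols. -/
def excess (s : List Bool) (k : ℕ) : ℤ :=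
  ((s.take k).count true : ℤ) - ((s.take k).count false : ℤ)

/-- `IsMatch s i j`: positions `i < j` form a matching pair of parentheses
(the standard stack-based matching). -/
def IsMatch (s : List Bool) (i j : ℕ) : Prop :=
  i < j ∧ j < s.length ∧ s[i]? = some true ∧ s[j]? = some false ∧
  excess s (j + 1) = excess s i ∧
  ∀ k, i < k → k ≤ j → excess s i < excess s k

/-- `EnclosePair s i v j`: `j` is the closing parenthesis whose matching pair
tightly encloses the matching pair `(i, v)`. -/
def EnclosePair (s : List Bool) (i v j : ℕ) : Prop :=
  (∃ i', IsMatch s i' j ∧ i' < i ∧ v < j) ∧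
  ∀ i'' j'', IsMatch s i'' j'' → i'' < i → v < j'' → j ≤ j''

/-- Longest common prefix of two paths. -/
def lcp : List Bool → List Bool → List Bool
  | a :: as, b :: bs => if a = b then a :: lcp as bs else []
  | _, _ => []

/-- BP encoding where each parenthesis is labelled by the subtree rooted at its node. -/
def BinTree.bpL : BinTree → List (Bool × BinTree)
  | .leaf => []
  | .node l r => (true, .node l r) :: (l.bpL ++ (false, .node l r) :: r.bpL)

/-!
The subtree rooted at `v` is encoded by a contiguous block `BP(u)` of the sequence starting at
`open(v)`; the block has nonnegative prefix excess and total excess zero, and it is followed either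
by the end of the sequence or by a closing parenthesis (that of the nearest ancestor holding `u` in
its left subtree). The pair matching that closing parenthesis opens before `open(v)`, so it is a
candidate for `enclose_close(v)`. Conversely, a pair opening before `open(v)` and closing strictly
inside the block would have to drop back to its starting excess, which is below the excess at
`open(v)`, while inside the block the excess never falls below that at `open(v)`. Hence
`enclose_close(v)` is the position just after the block.
-/

theorem excess_zero (s : List Bool) : excess s 0 = 0 := by
  simp [excess]

theorem excess_append_of_le_length {x : List Bool} (y : List Bool) {m : ℕ} (h : m ≤ x.length) :
    excess (x ++ y) m = excess x m := by
  simp [excess, List.take_append_of_le_length h]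

theorem excess_append_length_add (x y : List Bool) (m : ℕ) :
    excess (x ++ y) (x.length + m) = excess x x.length + excess y m := by
  simp only [excess, List.take_append, List.take_of_length_le (Nat.le_add_right x.length m),
    List.take_length, List.count_append, Nat.add_sub_cancel_left]
  push_cast
  ring

theorem excess_append_append_length_add (x : List Bool) {w : List Bool} (y : List Bool) {m : ℕ}
    (hm : m ≤ w.length) :
    excess (x ++ w ++ y) (x.length + m) = excess (x ++ w ++ y) x.length + excess w m := by
  have h₀ := excess_append_length_add x (w ++ y) 0
  have h₁ := excess_append_length_add x (w ++ y) m
  rw [excess_append_of_le_length y hm] at h₁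
  rw [add_zero, excess_zero, add_zero] at h₀
  rw [List.append_assoc, h₁, h₀]

theorem excess_cons_succ (b : Bool) (s : List Bool) (k : ℕ) :
    excess (b :: s) (k + 1) = (if b then 1 else -1) + excess s k := by
  cases b <;> simp [excess] <;> ring

theorem excess_succ_of_getElem? {s : List Bool} {a : ℕ} {b : Bool} (h : s[a]? = some b) :
    excess s (a + 1) = excess s a + (if b then 1 else -1) := by
  rw [excess, excess, List.take_add_one, h]
  cases b <;> simp [List.count_append] <;> ring

/-- The match is the last position before `m` whose excess is at most the excess just after `m`. -/
theorem exists_isMatch_of_excess_le {s : List Bool} {m k : ℕ} (hm : s[m]? = some false)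
    (hkm : k ≤ m) (hk : excess s k ≤ excess s (m + 1)) :
    ∃ a, IsMatch s a m ∧ excess s a = excess s (m + 1) := by
  set P : ℕ → Prop := fun k => excess s k ≤ excess s (m + 1)
  obtain ⟨a, ha_def⟩ : ∃ a, a = Nat.findGreatest P m := ⟨_, rfl⟩
  have ha : excess s a ≤ excess s (m + 1) := ha_def ▸ Nat.findGreatest_spec (P := P) hkm hk
  have hgt : ∀ k, a < k → k ≤ m → excess s (m + 1) < excess s k := fun k h₁ h₂ =>
    lt_of_not_ge (Nat.findGreatest_is_greatest (ha_def ▸ h₁) h₂)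
  have hm_lt : m < s.length := (List.getElem?_eq_some_iff.1 hm).1
  have hm_step := excess_succ_of_getElem? hm
  have ham : a < m := by
    rcases (ha_def ▸ Nat.findGreatest_le m : a ≤ m).lt_or_eq with h | rfl
    · exact h
    · simp only [Bool.false_eq_true, if_false] at hm_step; omega
  have ha_get : s[a]? = some s[a] := List.getElem?_eq_getElem (by omega)
  have ha_step := excess_succ_of_getElem? ha_get
  have ha_succ := hgt (a + 1) (by omega) (by omega)
  have ha_open : s[a] = true := by
    cases h : s[a]
    · rw [h] at ha_step; simp only [Bool.false_eq_true, if_false] at ha_step; omega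
    · rfl
  rw [ha_open] at ha_get ha_step
  simp only [if_true] at ha_step
  have hac : excess s a = excess s (m + 1) := by omega
  refine ⟨a, ⟨ham, hm_lt, ha_get, hm, hac.symm, ?_⟩, hac⟩
  exact fun k h₁ h₂ => hac ▸ hgt k h₁ h₂

theorem EnclosePair.eq_length_add_length {x w y : List Bool} {v j : ℕ}
    (hw : ∀ k, 0 ≤ excess w k) (hw_len : excess w w.length = 0) (hy : y.head? ≠ some true)
    (hv : x.length ≤ v) (hvw : v < x.length + w.length)
    (hj : EnclosePair (x ++ w ++ y) x.length v j) :
    j = x.length + w.length := by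
  have hblock : ∀ m ≤ w.length, excess (x ++ w ++ y) (x.length + m) =
      excess (x ++ w ++ y) x.length + excess w m :=
    fun m hm => excess_append_append_length_add x y hm
  have hclose : x.length + w.length < (x ++ w ++ y).length →
      (x ++ w ++ y)[x.length + w.length]? = some false := by
    intro hlt
    obtain ⟨b, y, rfl⟩ : ∃ b y', y = b :: y' :=
      List.exists_cons_of_length_pos (by simp only [List.length_append] at hlt; omega)
    cases b
    · simp
    · simp at hy
  generalize x ++ w ++ y = s at hblock hclose hj
  generalize x.length = i at *
  generalize w.length = L at *
  obtain ⟨⟨i₀, ⟨-, hj_len, -, -, hexc₀, hgt₀⟩, hi₀, hvj⟩, hmin⟩ := hj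
  apply le_antisymm
  · by_contra! hlt
    have hclose := hclose (by omega)
    have hafter : excess s (i + L + 1) = excess s i - 1 := by
      rw [excess_succ_of_getElem? hclose, hblock L le_rfl, hw_len]
      simp [sub_eq_add_neg]
    obtain ⟨a, hmatch, ha⟩ :=
      exists_isMatch_of_excess_le hclose (by omega : i₀ ≤ i + L) (hgt₀ _ (by omega) hlt).le
    have ha_lt : a < i := by
      by_contra! hia
      have := hblock (a - i) (by have := hmatch.1; omega)
      rw [Nat.add_sub_cancel' hia] at this
      have := hw (a - i)
      omega
    have := hmin a (i + L) hmatch ha_lt (by omega)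
    omega
  · by_contra! hlt
    have := hblock (j + 1 - i) (by omega)
    rw [Nat.add_sub_cancel' (by omega)] at this
    have := hgt₀ i hi₀ (by omega)
    have := hw (j + 1 - i)
    omega

namespace BinTree

theorem bp_eq_map_fst_bpL : ∀ u : BinTree, u.bp = u.bpL.map Prod.fst
  | leaf => rfl
  | node l r => by simp [bp, bpL, bp_eq_map_fst_bpL l, bp_eq_map_fst_bpL r]

theorem length_bpL (u : BinTree) : u.bpL.length = u.bp.length := by
  rw [bp_eq_map_fst_bpL, List.length_map]

theorem excess_bp_length : ∀ u : BinTree, excess u.bp u.bp.length = 0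
  | leaf => rfl
  | node l r => by
    simp only [bp, List.length_cons, List.length_append]
    rw [excess_cons_succ, excess_append_length_add, excess_cons_succ, excess_bp_length l,
      excess_bp_length r]
    norm_num

theorem excess_bp_nonneg : ∀ (u : BinTree) (k : ℕ), 0 ≤ excess u.bp k
  | leaf, k => by simp [bp, excess]
  | node _ _, 0 => by simp [excess]
  | node l r, k + 1 => by
    rw [bp, excess_cons_succ, if_pos rfl]
    rcases le_or_gt k l.bp.length with hk | hk
    · rw [excess_append_of_le_length _ hk]
      linarith [excess_bp_nonneg l k]
    · obtain ⟨m, rfl⟩ : ∃ m, k = l.bp.length + (m + 1) := ⟨k - l.bp.length - 1, by omega⟩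
      rw [excess_append_length_add, excess_bp_length, excess_cons_succ, if_neg Bool.false_ne_true]
      linarith [excess_bp_nonneg r m]

theorem bpL_eq_append_of_openIdx :
    ∀ {T u : BinTree} {p : List Bool} {i : ℕ}, T.subtreeAt p = some u →
      T.openIdx p = some i →
      ∃ A B, T.bpL = A ++ u.bpL ++ B ∧ A.length = i ∧ (B.map Prod.fst).head? ≠ some true
  | leaf, _, _, _, _, hi => by simp [openIdx] at hi
  | node l r, u, [], i, hu, hi => by
    simp only [subtreeAt, openIdx, Option.some.injEq] at hu hi
    exact ⟨[], [], by simp [hu], by simp [hi], by simp⟩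
  | node l r, u, false :: p, _, hu, hi => by
    simp only [subtreeAt, openIdx, Option.map_eq_some_iff] at hu hi
    obtain ⟨i, hi, rfl⟩ := hi
    obtain ⟨A, B, hl, rfl, hB⟩ := bpL_eq_append_of_openIdx hu hi
    refine ⟨(true, node l r) :: A, B ++ (false, node l r) :: r.bpL, by simp [bpL, hl], rfl, ?_⟩
    cases B <;> simp_all
  | node l r, u, true :: p, _, hu, hi => by
    simp only [subtreeAt, openIdx, Option.map_eq_some_iff] at hu hi
    obtain ⟨i, hi, rfl⟩ := hi
    obtain ⟨A, B, hr, rfl, hB⟩ := bpL_eq_append_of_openIdx hu hi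
    refine ⟨(true, node l r) :: (l.bpL ++ (false, node l r) :: A), B, by simp [bpL, hr], ?_, hB⟩
    simp only [List.length_cons, List.length_append, length_bpL]
    omega

theorem closeIdx_mem_Ioo :
    ∀ {T u : BinTree} {p : List Bool} {i v : ℕ}, T.subtreeAt p = some u →
      T.openIdx p = some i → T.closeIdx p = some v → v ∈ Set.Ioo i (i + u.bp.length)
  | leaf, _, _, _, _, _, hi, _ => by simp [openIdx] at hi
  | node l r, u, [], i, v, hu, hi, hv => by
    simp only [subtreeAt, openIdx, closeIdx, Option.some.injEq] at hu hi hv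
    subst hu hi hv
    simp [bp]
  | node l r, u, false :: p, _, _, hu, hi, hv => by
    simp only [subtreeAt, openIdx, closeIdx, Option.map_eq_some_iff] at hu hi hv
    obtain ⟨i, hi, rfl⟩ := hi
    obtain ⟨v, hv, rfl⟩ := hv
    have := closeIdx_mem_Ioo hu hi hv
    simp only [Set.mem_Ioo] at this ⊢
    omega
  | node l r, u, true :: p, _, _, hu, hi, hv => by
    simp only [subtreeAt, openIdx, closeIdx, Option.map_eq_some_iff] at hu hi hv
    obtain ⟨i, hi, rfl⟩ := hi
    obtain ⟨v, hv, rfl⟩ := hv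
    have := closeIdx_mem_Ioo hu hi hv
    simp only [Set.mem_Ioo] at this ⊢
    omega

theorem bpL_drop_take_eq_of_enclosePair {T u : BinTree} {p : List Bool} {i v j : ℕ}
    (hu : T.subtreeAt p = some u) (hi : T.openIdx p = some i) (hv : T.closeIdx p = some v)
    (hj : EnclosePair T.bp i v j) :
    (T.bpL.drop i).take (j - i) = u.bpL := by
  obtain ⟨A, B, hT, rfl, hB⟩ := bpL_eq_append_of_openIdx hu hi
  obtain ⟨hiv, hvi⟩ := closeIdx_mem_Ioo hu hi hv
  have hbp : T.bp = A.map Prod.fst ++ u.bp ++ B.map Prod.fst := by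
    rw [bp_eq_map_fst_bpL, hT, bp_eq_map_fst_bpL u, List.map_append, List.map_append]
  rw [hbp, ← List.length_map (f := Prod.fst)] at hj
  have hj_eq := hj.eq_length_add_length u.excess_bp_nonneg u.excess_bp_length hB
    (by simpa using hiv.le) (by simpa using hvi)
  rw [hT, hj_eq, List.length_map, Nat.add_sub_cancel_left, ← length_bpL, List.append_assoc,
    List.drop_left, List.take_left]

end BinTree

theorem subtree_eq_interval_general (t : BinTree) (p : List Bool) (u : BinTree)
    (hu : BinTree.subtreeAt (BinTree.node t .leaf) p = some u)
    (i v j : ℕ)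
    (hi : BinTree.openIdx (.node t .leaf) p = some i)
    (hv : BinTree.closeIdx (.node t .leaf) p = some v)
    (hj : EnclosePair (BinTree.node t .leaf).bp i v j) :
    (((BinTree.node t .leaf).bpL.drop i).take (j - i)) = u.bpL :=
  BinTree.bpL_drop_take_eq_of_enclosePair hu hi hv hj

/-- in the BP encoding (with a sentinel pair of enclosing
parentheses, i.e. working inside `node t leaf`), the subtree rooted at a node
`v` corresponds exactly to the half-open interval `[open v, encloseClose v)`. -/
theorem subtree_eq_interval (t : BinTree) (p : List Bool) (u : BinTree)
    (hu : BinTree.subtreeAt (BinTree.node t .leaf) p = some u) (hne : u ≠ .leaf)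
    (i v j : ℕ)
    (hi : BinTree.openIdx (.node t .leaf) p = some i)
    (hv : BinTree.closeIdx (.node t .leaf) p = some v)
    (hj : EnclosePair (BinTree.node t .leaf).bp i v j) :
    (((BinTree.node t .leaf).bpL.drop i).take (j - i)) = u.bpL :=
  subtree_eq_interval_general t p u hu i v j hi hv hj
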